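/- Let G be a finite group, S ⊆ G, and let Ĝ = {x ↦ x·g : g ∈ G} be the right regular representation of G inside the symmetric group on G. Then Ĝ is contained in Aut(Cay(G,S)), and the normalizer of Ĝ in Aut(Cay(G,S)) is exactly the set of permutations of G of the form x ↦ φ(x)·g with φ ∈ Aut(G,S) and g ∈ G (the internal semidirect product Aut(G,S) ⋉ Ĝ). -/

import Mathlib

/-! Common definitions: Cayley digraphs, digraph automorphism groups,
DRRs/GRRs, detecting groups, the regular representation, the group `W(G,N)`,
wreath and cartesian products of digraphs, and the wreath product of groups. -/

universe u

/-- The adjacency relation of the Cayley digraph `Cay(G,S)`: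
there is a directed edge from `g₁` to `g₂` iff `g₂ = s * g₁` for some `s ∈ S`. -/
def cayAdj {G : Type*} [Group G] (S : Set G) : G → G → Prop :=
  fun g₁ g₂ => ∃ s ∈ S, g₂ = s * g₁

/-- The automorphism group of a digraph (given by its adjacency relation),
as a subgroup of the symmetric group on the vertices. -/
def digraphAut {V : Type*} (Adj : V → V → Prop) : Subgroup (Equiv.Perm V) where
  carrier := {σ | ∀ x y, Adj (σ x) (σ y) ↔ Adj x y}
  one_mem' := fun _ _ => Iff.rfl
  mul_mem' := by
    intro σ τ hσ hτ x y
    simp only [Equiv.Perm.mul_apply]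
    exact (hσ _ _).trans (hτ _ _)
  inv_mem' := by
    intro σ hσ x y
    have h := (hσ (σ⁻¹ x) (σ⁻¹ y)).symm
    simpa using h

/-- A digraph is a DRR (digraphical regular representation) of the group `G` if its
automorphism group is isomorphic to `G` and acts regularly on the vertex set. -/
def IsDRR (G : Type*) [Group G] {V : Type*} (Adj : V → V → Prop) : Prop :=
  Nonempty (digraphAut Adj ≃* G) ∧
    ∀ v w : V, ∃! σ : digraphAut Adj, (σ : Equiv.Perm V) v = w

/-- A GRR (graphical regular representation) of `G` is a DRR that is a graph. -/
def IsGRR (G : Type*) [Group G] {V : Type*} (Adj : V → V → Prop) : Prop :=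
  Symmetric Adj ∧ IsDRR G Adj

/-- `Aut(G,S)` is trivial: the only group automorphism `φ` of `G` with `φ(S) = S`
is the identity. -/
def AutGSTrivial {G : Type*} [Group G] (S : Set G) : Prop :=
  ∀ φ : MulAut G, ⇑φ '' S = S → φ = 1

/-- `G` is DRR-detecting: for every `S ⊆ G`, if `Aut(G,S) = 1` then
`Cay(G,S)` is a DRR of `G`. -/
def DRRDetecting (G : Type*) [Group G] : Prop :=
  ∀ S : Set G, AutGSTrivial S → IsDRR G (cayAdj S)

/-- `G` is GRR-detecting: for every inverse-closed `S ⊆ G`, if `Aut(G,S) = 1` then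
`Cay(G,S)` is a GRR of `G`. -/
def GRRDetecting (G : Type*) [Group G] : Prop :=
  ∀ S : Set G, (∀ s ∈ S, s⁻¹ ∈ S) → AutGSTrivial S → IsGRR G (cayAdj S)

/-- `G` admits a DRR (equivalently, some Cayley digraph of `G` is a DRR). -/
def HasDRR (G : Type*) [Group G] : Prop :=
  ∃ S : Set G, IsDRR G (cayAdj S)

/-- `G` admits a GRR (equivalently, some Cayley graph of `G` is a GRR). -/
def HasGRR (G : Type*) [Group G] : Prop :=
  ∃ S : Set G, (∀ s ∈ S, s⁻¹ ∈ S) ∧ IsGRR G (cayAdj S)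

/-- The right regular representation `Ĝ = {x ↦ x·g : g ∈ G}` of `G`,
as a subgroup of the symmetric group on `G`. -/
def regularRep (G : Type*) [Group G] : Subgroup (Equiv.Perm G) where
  carrier := {σ | ∃ g : G, ∀ x, σ x = x * g}
  one_mem' := ⟨1, fun x => (mul_one x).symm⟩
  mul_mem' := by
    rintro σ τ ⟨g, hg⟩ ⟨h, hh⟩
    exact ⟨h * g, fun x => by
      simp only [Equiv.Perm.mul_apply, hg, hh, mul_assoc]⟩
  inv_mem' := by
    rintro σ ⟨g, hg⟩
    refine ⟨g⁻¹, fun x => ?_⟩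
    have h1 : σ (x * g⁻¹) = x := by rw [hg]; group
    calc σ⁻¹ x = σ⁻¹ (σ (x * g⁻¹)) := by rw [h1]
      _ = x * g⁻¹ := by simp

/-- The set `W(G,N)` of all permutations `φ_{c,f} : x ↦ x·c·f(x̄)` of `G`,
where `c ∈ G` and `f : G/N → N`. -/
def Wset (G : Type*) [Group G] (N : Subgroup G) [N.Normal] : Set (Equiv.Perm G) :=
  {σ | ∃ (c : G) (f : G ⧸ N → G), (∀ q, f q ∈ N) ∧
      ∀ x : G, σ x = x * c * f (QuotientGroup.mk x)}

/-- The wreath product `X ≀ Y` of two digraphs. -/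
def wreathAdj {X Y : Type*} (A : X → X → Prop) (B : Y → Y → Prop) :
    X × Y → X × Y → Prop :=
  fun p q => A p.1 q.1 ∨ (p.1 = q.1 ∧ B p.2 q.2)

/-- The cartesian product `X □ Y` of two digraphs. -/
def cartAdj {X Y : Type*} (A : X → X → Prop) (B : Y → Y → Prop) :
    X × Y → X × Y → Prop :=
  fun p q => (p.1 = q.1 ∧ B p.2 q.2) ∨ (p.2 = q.2 ∧ A p.1 q.1)

/-- A digraph is prime with respect to the cartesian product if it has more than one
vertex and is not isomorphic to a cartesian product of two digraphs,
each with more than one vertex. -/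
def IsPrimeDigraph {V : Type u} (Adj : V → V → Prop) : Prop :=
  (∃ x y : V, x ≠ y) ∧
    ¬ ∃ (X Y : Type u) (A : X → X → Prop) (B : Y → Y → Prop) (e : V ≃ X × Y),
        (∃ x₁ x₂ : X, x₁ ≠ x₂) ∧ (∃ y₁ y₂ : Y, y₁ ≠ y₂) ∧
          ∀ v w : V, Adj v w ↔ cartAdj A B (e v) (e w)

/-- A digraph is weakly connected if any two vertices are joined by a path in the
underlying undirected graph. -/
def WeaklyConnected {V : Type*} (Adj : V → V → Prop) : Prop :=
  ∀ x y : V, Relation.ReflTransGen (fun a b => Adj a b ∨ Adj b a) x y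

/-- Translation of coordinates: the automorphism `v ↦ (x ↦ v (x * q))`
of the group `Q → N`. -/
def transAut {Q N : Type*} [Group Q] [Group N] (q : Q) : (Q → N) ≃* (Q → N) where
  toFun v := fun x => v (x * q)
  invFun v := fun x => v (x * q⁻¹)
  left_inv v := funext fun x => by simp [mul_assoc]
  right_inv v := funext fun x => by simp [mul_assoc]
  map_mul' v w := rfl

/-- The action of `Q` on `Q → N` by translating coordinates, as a homomorphism
`Q →* MulAut (Q → N)`. -/
def transHom (Q N : Type*) [Group Q] [Group N] : Q →* MulAut (Q → N) where
  toFun := transAut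
  map_one' := by
    ext v x
    simp [transAut]
  map_mul' q₁ q₂ := by
    ext v x
    simp [transAut, mul_assoc, MulAut.mul_apply]

/-- The wreath product `Q ≀ N` of two groups: the semidirect product
`N^Q ⋊ Q`, with `Q` acting on `N^Q` by translating the coordinates. -/
abbrev WreathProd (Q N : Type*) [Group Q] [Group N] :=
  SemidirectProduct (Q → N) Q (transHom Q N)

/-! A permutation `σ` normalizing the right translations satisfies `σ (x * h) = σ x * k` with
`k` depending only on `h`, so `x ↦ σ x * (σ 1)⁻¹` is an automorphism `φ` and `σ = φ · σ 1`.
Adjacency in `Cay(G,S)` depends only on `y * x⁻¹`, so right translations are digraph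
automorphisms, and `φ` is one exactly when `φ(S) = S`. -/

section

variable {G : Type*} [Group G]

lemma cayAdj_iff {S : Set G} {x y : G} : cayAdj S x y ↔ y * x⁻¹ ∈ S :=
  ⟨fun ⟨s, hs, h⟩ => by rwa [h, mul_inv_cancel_right], fun h => ⟨_, h, by group⟩⟩

lemma mem_regularRep_iff {σ : Equiv.Perm G} : σ ∈ regularRep G ↔ ∃ g, σ = Equiv.mulRight g :=
  exists_congr fun _ => by rw [Equiv.ext_iff]; rfl

lemma mulRight_mem_regularRep (g : G) : Equiv.mulRight g ∈ regularRep G :=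
  mem_regularRep_iff.2 ⟨g, rfl⟩

lemma mulRight_mem_digraphAut_cayAdj (S : Set G) (g : G) :
    Equiv.mulRight g ∈ digraphAut (cayAdj S) := fun x y => by
  simp only [Equiv.coe_mulRight, cayAdj_iff, mul_inv_rev, mul_assoc, mul_inv_cancel_left]

lemma regularRep_le_digraphAut_cayAdj (S : Set G) : regularRep G ≤ digraphAut (cayAdj S) := by
  rintro σ hσ
  obtain ⟨g, rfl⟩ := mem_regularRep_iff.1 hσ
  exact mulRight_mem_digraphAut_cayAdj S g

lemma MulEquiv.toEquiv_mem_digraphAut_cayAdj_iff (S : Set G) (φ : MulAut G) :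
    φ.toEquiv ∈ digraphAut (cayAdj S) ↔ ⇑φ '' S = S := by
  have hS : ⇑φ '' S = S ↔ ∀ z, φ z ∈ S ↔ z ∈ S :=
    eq_comm.trans ((φ.toEquiv.preimage_eq_iff_eq_image S S).symm.trans Set.ext_iff)
  rw [hS]
  refine ⟨fun h z => ?_, fun h x y => ?_⟩
  · simpa [cayAdj_iff] using h 1 z
  · simpa [cayAdj_iff] using h (y * x⁻¹)

def affinePerm (φ : MulAut G) (g : G) : Equiv.Perm G :=
  φ.toEquiv.trans (Equiv.mulRight g)

@[simp]
lemma affinePerm_apply (φ : MulAut G) (g x : G) : affinePerm φ g x = φ x * g := rfl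

lemma affinePerm_inv (φ : MulAut G) (g : G) :
    (affinePerm φ g)⁻¹ = affinePerm φ⁻¹ (φ⁻¹ g⁻¹) := by
  ext x
  rw [Equiv.Perm.inv_eq_iff_eq]
  simp [MulAut.inv_apply]

lemma affinePerm_mul_mulRight_mul_inv (φ : MulAut G) (g h : G) :
    affinePerm φ g * Equiv.mulRight h * (affinePerm φ g)⁻¹ = Equiv.mulRight (g⁻¹ * φ h * g) := by
  ext x
  simp [affinePerm_inv, mul_assoc]

lemma affinePerm_mem_normalizer_regularRep (φ : MulAut G) (g : G) :
    affinePerm φ g ∈ Subgroup.normalizer (regularRep G) := by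
  have conj_mem : ∀ (ψ : MulAut G) (c : G) (ρ), ρ ∈ regularRep G →
      affinePerm ψ c * ρ * (affinePerm ψ c)⁻¹ ∈ regularRep G := by
    rintro ψ c ρ hρ
    obtain ⟨h, rfl⟩ := mem_regularRep_iff.1 hρ
    rw [affinePerm_mul_mulRight_mul_inv]
    exact mulRight_mem_regularRep _
  refine Subgroup.mem_normalizer_iff.2 fun ρ => ⟨conj_mem φ g ρ, fun hρ => ?_⟩
  have := conj_mem φ⁻¹ (φ⁻¹ g⁻¹) _ hρ
  rw [← affinePerm_inv, inv_inv] at this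
  simpa only [mul_assoc, inv_mul_cancel_left, inv_mul_cancel, mul_one] using this

lemma affinePerm_mem_digraphAut_cayAdj_iff (S : Set G) (φ : MulAut G) (g : G) :
    affinePerm φ g ∈ digraphAut (cayAdj S) ↔ ⇑φ '' S = S := by
  rw [← MulEquiv.toEquiv_mem_digraphAut_cayAdj_iff]
  exact Subgroup.mul_mem_cancel_left _ (mulRight_mem_digraphAut_cayAdj S g)

lemma exists_mul_right_of_mem_normalizer_regularRep {σ : Equiv.Perm G}
    (hσ : σ ∈ Subgroup.normalizer (regularRep G)) (h : G) : ∃ k, ∀ x, σ (x * h) = σ x * k := by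
  obtain ⟨k, hk⟩ := mem_regularRep_iff.1 <|
    (Subgroup.mem_normalizer_iff.1 hσ _).1 (mulRight_mem_regularRep h)
  exact ⟨k, fun x => by simpa using congr($hk (σ x))⟩

lemma exists_eq_affinePerm_of_mem_normalizer_regularRep {σ : Equiv.Perm G}
    (hσ : σ ∈ Subgroup.normalizer (regularRep G)) : ∃ φ : MulAut G, σ = affinePerm φ (σ 1) := by
  have hmul : ∀ x y, σ (x * y) * (σ 1)⁻¹ = σ x * (σ 1)⁻¹ * (σ y * (σ 1)⁻¹) := fun x y => by
    obtain ⟨k, hk⟩ := exists_mul_right_of_mem_normalizer_regularRep hσ y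
    have hy : σ y = σ 1 * k := by simpa using hk 1
    rw [hk, hy]; group
  refine ⟨MulEquiv.mk' (σ.trans (Equiv.mulRight (σ 1)⁻¹)) hmul, ?_⟩
  ext x
  exact (inv_mul_cancel_right _ _).symm

end

theorem regularRep_le_and_normalizer_eq_general {G : Type*} [Group G] (S : Set G) :
    regularRep G ≤ digraphAut (cayAdj S) ∧
      (↑(Subgroup.normalizer (regularRep G) ⊓ digraphAut (cayAdj S)) :
          Set (Equiv.Perm G)) =
        {σ : Equiv.Perm G | ∃ (φ : MulAut G) (g : G),
          ⇑φ '' S = S ∧ ∀ x : G, σ x = φ x * g} := by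
  refine ⟨regularRep_le_digraphAut_cayAdj S, Set.ext fun σ => ⟨?_, ?_⟩⟩
  · rintro ⟨hN, hA : σ ∈ digraphAut (cayAdj S)⟩
    obtain ⟨φ, hσ⟩ := exists_eq_affinePerm_of_mem_normalizer_regularRep hN
    rw [hσ, affinePerm_mem_digraphAut_cayAdj_iff] at hA
    exact ⟨φ, σ 1, hA, Equiv.ext_iff.1 hσ⟩
  · rintro ⟨φ, g, hS, hσ⟩
    obtain rfl : σ = affinePerm φ g := Equiv.ext hσ
    exact ⟨affinePerm_mem_normalizer_regularRep φ g,
      (affinePerm_mem_digraphAut_cayAdj_iff S φ g).2 hS⟩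

/-- The right regular representation `Ĝ` is contained in
`Aut(Cay(G,S))`, and the normalizer of `Ĝ` in `Aut(Cay(G,S))` consists exactly of the
permutations `x ↦ φ(x)·g` with `φ ∈ Aut(G,S)` and `g ∈ G`. -/
theorem regularRep_le_and_normalizer_eq {G : Type*} [Group G] [Fintype G] (S : Set G) :
    regularRep G ≤ digraphAut (cayAdj S) ∧
      (↑(Subgroup.normalizer (regularRep G) ⊓ digraphAut (cayAdj S)) :
          Set (Equiv.Perm G)) =
        {σ : Equiv.Perm G | ∃ (φ : MulAut G) (g : G),
          ⇑φ '' S = S ∧ ∀ x : G, σ x = φ x * g} :=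
  regularRep_le_and_normalizer_eq_general S
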